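/- arXiv:1608.08086 — 3 statements merged into one kernel-verified Lean document; each statement's English description precedes it below -/
import Mathlib

section
/- For every real x ≥ 3, one has ∏_{p prime, p ≤ x} (1 − 1/p) > 0.09 / log x. -/
/-!
Write `P(n) = ∏_{p ≤ n} (1 - 1/p)` and `T(n) = ∑_{p ≤ n} log p / p`. Legendre's formula, `n! ≤ nⁿ`
and Chebyshev's `θ(n) ≤ n log 4` give `T(n) ≤ log n + log 4`. Against this estimate, discrete
partial summation shows that the potential `Φ(n) = -log P(n) + 1/n - log log n - (T(n) - log 4) / log n`
does not increase for `n ≥ 2`; the term `1/n` absorbs `-log (1 - 1/p) - 1/p`. Hence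
`P(n) log n ≥ exp (-1 - Φ(100)) > 0.09` for `n ≥ 100`, while for smaller `n` the product is
at least `P(100) > 0.12` and `log x > 1`.
-/

open Finset Real

section
open _root_.Nat hiding log

theorem Nat.sum_div_mul_log_le_log_factorial (n : ℕ) :
    ∑ p ∈ primesLE n, ((n / p : ℕ) : ℝ) * Real.log p ≤ Real.log (n ! : ℕ) := by
  have hsupp : (n !).factorization.support ⊆ primesLE n := fun p hp => by
    rw [Nat.support_factorization, Nat.mem_primeFactors] at hp
    exact mem_primesLE.mpr ⟨(hp.1.dvd_factorial).mp hp.2.1, hp.1⟩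
  rw [log_nat_eq_sum_factorization, Finsupp.sum_of_support_subset _ hsupp _ (by simp)]
  refine sum_le_sum fun p hp => mul_le_mul_of_nonneg_right ?_ (log_natCast_nonneg p)
  rw [Nat.factorization_factorial (prime_of_mem_primesLE hp) (b := Nat.log p n + 2) (by omega)]
  have h1 : 1 ∈ Ico 1 (Nat.log p n + 2) := by simp
  norm_cast
  simpa using single_le_sum (f := fun i => n / p ^ i) (fun _ _ => Nat.zero_le _) h1

theorem Real.log_add_div_le_log_add_div {t L L' : ℝ} (hL : 0 < L) (ht : t ≤ L) (hLL' : L ≤ L') :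
    log L + t / L ≤ log L' + t / L' := by
  have hL' : 0 < L' := hL.trans_le hLL'
  have hlog : 1 - L / L' ≤ log L' - log L := by
    rw [← log_div hL'.ne' hL.ne', ← inv_div]; exact one_sub_inv_le_log_of_pos (by positivity)
  have hgap : t / L - t / L' = t / L * (1 - L / L') := by field_simp
  have : t / L * (1 - L / L') ≤ 1 - L / L' :=
    mul_le_of_le_one_left (by rw [sub_nonneg, div_le_one hL']; exact hLL')
      ((div_le_one hL).mpr ht)
  linarith

theorem Real.neg_log_one_sub_one_div_add_one_le {x : ℝ} (hx : 0 < x) :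
    -log (1 - 1 / (x + 1)) ≤ 1 / x := by
  have h : 1 - 1 / (x + 1) = (1 + 1 / x)⁻¹ := by field_simp; ring
  rw [h, log_inv, neg_neg]
  linarith [log_le_sub_one_of_pos (by positivity : 0 < 1 + 1 / x)]

namespace Mertens

noncomputable def primeLogSum (n : ℕ) : ℝ := ∑ p ∈ primesLE n, log p / p

noncomputable def eulerProduct (n : ℕ) : ℝ := ∏ p ∈ primesLE n, (1 - (1 : ℝ) / p)

noncomputable def potential (n : ℕ) : ℝ :=
  -log (eulerProduct n) + 1 / n - log (log n) - (primeLogSum n - log 4) / log n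

theorem primeLogSum_nonneg (n : ℕ) : 0 ≤ primeLogSum n :=
  sum_nonneg fun p _ => div_nonneg (log_natCast_nonneg p) p.cast_nonneg

theorem mul_primeLogSum_le (n : ℕ) :
    n * primeLogSum n ≤ log (n ! : ℕ) + Chebyshev.theta n := by
  have hterm (p : ℕ) (hp : p ∈ primesLE n) :
      (n : ℝ) * (log p / p) ≤ (n / p : ℕ) * log p + log p := by
    have hp0 : (0 : ℝ) < p := mod_cast (prime_of_mem_primesLE hp).pos
    have hdiv : (n : ℝ) / p ≤ (n / p : ℕ) + 1 := by
      rw [← Nat.floor_div_eq_div (K := ℝ)]; exact (Nat.lt_floor_add_one _).le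
    calc (n : ℝ) * (log p / p) = n / p * log p := by ring
      _ ≤ ((n / p : ℕ) + 1) * log p := by gcongr
      _ = (n / p : ℕ) * log p + log p := by ring
  calc n * primeLogSum n ≤ ∑ p ∈ primesLE n, (((n / p : ℕ) : ℝ) * log p + log p) := by
        rw [primeLogSum, mul_sum]; exact sum_le_sum hterm
    _ ≤ log (n ! : ℕ) + Chebyshev.theta n := by
        rw [sum_add_distrib, Chebyshev.theta_eq_sum_primesLE_log]
        gcongr
        exact Nat.sum_div_mul_log_le_log_factorial n

theorem primeLogSum_le (n : ℕ) : primeLogSum n ≤ log n + log 4 := by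
  rcases n.eq_zero_or_pos with rfl | hn
  · simp [primeLogSum, log_nonneg]
  have hn' : (0 : ℝ) < n := mod_cast hn
  have hfact : log (n ! : ℕ) ≤ n * log n := by
    rw [← Real.log_pow]; exact log_le_log (by positivity) (mod_cast n.factorial_le_pow)
  refine le_of_mul_le_mul_left ?_ hn'
  linarith [mul_primeLogSum_le n, Chebyshev.theta_le_log4_mul_x hn'.le]

theorem one_sub_one_div_pos_of_mem_primesLE {n p : ℕ} (hp : p ∈ primesLE n) :
    0 < 1 - (1 : ℝ) / p := by
  have : (1 : ℝ) < p := mod_cast one_lt_of_mem_primesLE hp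
  rw [sub_pos, div_lt_one (by linarith)]; exact this

theorem eulerProduct_pos (n : ℕ) : 0 < eulerProduct n :=
  prod_pos fun _ hp => one_sub_one_div_pos_of_mem_primesLE hp

theorem eulerProduct_antitone : Antitone eulerProduct := fun _ _ hmn =>
  prod_le_prod_of_subset_of_le_one (primesLE_mono hmn)
    (fun _ hp => (one_sub_one_div_pos_of_mem_primesLE hp).le)
    (fun p _ _ => sub_le_self _ (by positivity))

theorem eulerProduct_succ (n : ℕ) : eulerProduct (n + 1) =
    if (n + 1).Prime then (1 - 1 / (n + 1 : ℕ)) * eulerProduct n else eulerProduct n := by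
  rw [eulerProduct, eulerProduct, primesLE_succ]
  split_ifs
  · exact prod_insert (notMem_primesLE n)
  · rfl

theorem primeLogSum_succ (n : ℕ) : primeLogSum (n + 1) =
    if (n + 1).Prime then log (n + 1 : ℕ) / (n + 1 : ℕ) + primeLogSum n else primeLogSum n := by
  rw [primeLogSum, primeLogSum, primesLE_succ]
  split_ifs
  · exact sum_insert (notMem_primesLE n)
  · rfl

theorem potential_succ_le {n : ℕ} (hn : 2 ≤ n) : potential (n + 1) ≤ potential n := by
  have hn' : (2 : ℝ) ≤ n := mod_cast hn
  have hL : 0 < log n := log_pos (by linarith)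
  have hLL' : log n ≤ log (n + 1 : ℕ) := log_le_log (by linarith) (by push_cast; linarith)
  have hL' : 0 < log (n + 1 : ℕ) := hL.trans_le hLL'
  have hmono := log_add_div_le_log_add_div hL
    (by linarith [primeLogSum_le n] : primeLogSum n - log 4 ≤ log n) hLL'
  have hinv : (1 : ℝ) / (n + 1 : ℕ) ≤ 1 / n := by gcongr; omega
  rw [potential, potential, eulerProduct_succ, primeLogSum_succ]
  split_ifs with hp
  · have hfactor : -log (1 - 1 / (n + 1 : ℕ)) ≤ 1 / n := by
      push_cast; exact neg_log_one_sub_one_div_add_one_le (by linarith)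
    have hsplit : (log (n + 1 : ℕ) / (n + 1 : ℕ) + primeLogSum n - log 4) / log (n + 1 : ℕ)
        = 1 / (n + 1 : ℕ) + (primeLogSum n - log 4) / log (n + 1 : ℕ) := by
      field_simp; ring
    rw [hsplit, log_mul (one_sub_one_div_pos_of_mem_primesLE
      (mem_primesLE.mpr ⟨le_rfl, hp⟩)).ne' (eulerProduct_pos n).ne']
    linarith
  · linarith

theorem potential_le_of_le {m n : ℕ} (hm : 2 ≤ m) (hmn : m ≤ n) : potential n ≤ potential m :=
  antitoneOn_nat_Ici_of_succ_le (fun _ hk => potential_succ_le (hm.trans hk)) (le_refl m) hmn hmn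

theorem exp_neg_one_sub_potential_div_log_le {m n : ℕ} (hm : 2 ≤ m) (hmn : m ≤ n) :
    exp (-1 - potential m) / log n ≤ eulerProduct n := by
  have hn : (2 : ℝ) ≤ n := mod_cast hm.trans hmn
  have hL : 0 < log n := log_pos (by linarith)
  have hT : (primeLogSum n - log 4) / log n ≤ 1 := by
    rw [div_le_one hL]; linarith [primeLogSum_le n]
  have hpot : -log (eulerProduct n) - log (log n) - 1 ≤ potential m := by
    have hdef : potential n = -log (eulerProduct n) + 1 / n - log (log n)
        - (primeLogSum n - log 4) / log n := rfl
    have : 0 ≤ 1 / (n : ℝ) := by positivity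
    linarith [potential_le_of_le hm hmn]
  rw [div_le_iff₀ hL, ← exp_log (eulerProduct_pos n), ← exp_log hL, ← exp_add]
  exact exp_le_exp.mpr (by linarith)

theorem eulerProduct_hundred : 0.12 ≤ eulerProduct 100 := by
  rw [eulerProduct, primesLE_eq_filter_range, prod_filter]
  simp only [prod_range_succ, prod_range_zero]
  norm_num

theorem four_lt_log_hundred : 4 < log 100 := by
  have h3 : 1 < log 3 := by rw [lt_log_iff_exp_lt (by norm_num)]; linarith [exp_one_lt_d9]
  have : log (3 ^ 4) < log 100 := log_lt_log (by norm_num) (by norm_num)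
  rw [Real.log_pow] at this
  push_cast at this; linarith

theorem lt_exp_neg_one_sub_potential_hundred : 0.09 < exp (-1 - potential 100) := by
  have hL := four_lt_log_hundred
  have hL0 : 0 < log 100 := by linarith
  have hlog4 : log 4 < 1.3863 := by
    rw [show (4 : ℝ) = 2 ^ 2 by norm_num, Real.log_pow]; push_cast; linarith [log_two_lt_d9]
  have he : 1 / 2.7182818286 ≤ exp (-1) := by
    rw [exp_neg, ← one_div]; gcongr; exact exp_one_lt_d9.le
  have hP := eulerProduct_hundred
  have hP0 := eulerProduct_pos 100
  have hs : 1 - (1 / 100 + log 4 / log 100) ≤ exp (-(1 / 100 + log 4 / log 100)) := by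
    linarith [add_one_le_exp (-(1 / 100 + log 4 / log 100))]
  calc (0.09 : ℝ) < 1 / 2.7182818286 * (0.12 * (0.99 * 4 - 1.3863)) := by norm_num
    _ ≤ exp (-1) * (eulerProduct 100 * (0.99 * log 100 - log 4)) := by
        gcongr
    _ = exp (-1) * eulerProduct 100 * log 100 * (1 - (1 / 100 + log 4 / log 100)) := by
        field_simp; ring
    _ ≤ exp (-1) * eulerProduct 100 * log 100 * exp (-(1 / 100 + log 4 / log 100)) := by
        gcongr
    _ = exp (-1 + log (eulerProduct 100) + log (log 100) - (1 / 100 + log 4 / log 100)) := by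
        rw [sub_eq_add_neg, exp_add, exp_add, exp_add, exp_log hP0, exp_log hL0]
    _ ≤ exp (-1 - potential 100) := by
        have hT : 0 ≤ primeLogSum 100 / log 100 := div_nonneg (primeLogSum_nonneg 100) hL0.le
        refine exp_le_exp.mpr ?_
        unfold potential
        push_cast
        rw [sub_div]
        linarith

end Mertens
end

/-- For every real `x ≥ 3`, `∏_{p ≤ x} (1 - 1/p) > 0.09 / log x`. -/
theorem mertens_lower_bound_009 :
    ∀ x : ℝ, 3 ≤ x →
      (∏ p ∈ (Finset.Iic ⌊x⌋₊).filter Nat.Prime, (1 - (1 : ℝ) / p)) > 0.09 / Real.log x := by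
  intro x hx
  have hprod : ∏ p ∈ (Iic ⌊x⌋₊).filter Nat.Prime, (1 - (1 : ℝ) / p)
      = Mertens.eulerProduct ⌊x⌋₊ := by
    rw [Mertens.eulerProduct]; congr 1; ext p; simp [Nat.mem_primesLE]
  have hlogx : 1 < log x := by rw [lt_log_iff_exp_lt (by linarith)]; linarith [exp_one_lt_d9]
  rw [hprod, gt_iff_lt]
  rcases le_or_gt 100 ⌊x⌋₊ with hn | hn
  · have hlogn : 0 < log ⌊x⌋₊ := log_pos (by exact_mod_cast (by omega : 1 < ⌊x⌋₊))
    calc 0.09 / log x ≤ 0.09 / log ⌊x⌋₊ := by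
          gcongr; exact Nat.floor_le (by linarith)
      _ < exp (-1 - Mertens.potential 100) / log ⌊x⌋₊ := by
          gcongr; exact Mertens.lt_exp_neg_one_sub_potential_hundred
      _ ≤ Mertens.eulerProduct ⌊x⌋₊ := Mertens.exp_neg_one_sub_potential_div_log_le (by norm_num) hn
  · calc 0.09 / log x < 0.12 := by rw [div_lt_iff₀ (by linarith)]; linarith
      _ ≤ Mertens.eulerProduct 100 := Mertens.eulerProduct_hundred
      _ ≤ Mertens.eulerProduct ⌊x⌋₊ := Mertens.eulerProduct_antitone hn.le
end

section
/- If n is a composite natural number (n > 1 and n not prime) such that φ(n) divides n − 1, then n is odd and squarefree. -/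
/-! Since `n` and `n - 1` are coprime, `φ(n) ∣ n - 1` forces `gcd(n, φ(n)) = 1`. A square factor
`p²` of `n` would put `p` into `φ(n)`, and for `n > 2` the totient is even, so an even `n` would
share the factor `2` with `φ(n)`. -/

namespace Nat

theorem Prime.dvd_totient_of_sq_dvd {p n : ℕ} (hp : p.Prime) (h : p ^ 2 ∣ n) : p ∣ φ n := by
  obtain ⟨m, rfl⟩ := h
  rw [pow_two, mul_assoc, totient_mul_of_prime_of_dvd hp (dvd_mul_right p m)]
  exact dvd_mul_right p _

theorem coprime_totient_of_totient_dvd_sub_one {n : ℕ} (hn : 0 < n) (h : φ n ∣ n - 1) :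
    n.Coprime (φ n) :=
  Coprime.coprime_dvd_right h <| (coprime_self_sub_right hn).2 (coprime_one_right n)

theorem squarefree_of_coprime_totient {n : ℕ} (h : n.Coprime (φ n)) : Squarefree n := by
  rw [squarefree_iff_prime_squarefree]
  intro p hp hpp
  have hp_dvd_n : p ∣ n := (dvd_mul_right p p).trans hpp
  have hp_dvd_totient : p ∣ φ n := hp.dvd_totient_of_sq_dvd (pow_two p ▸ hpp)
  exact not_coprime_of_dvd_of_dvd hp.one_lt hp_dvd_n hp_dvd_totient h

theorem odd_of_coprime_totient {n : ℕ} (hn : 2 < n) (h : n.Coprime (φ n)) : Odd n := by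
  rw [← not_even_iff_odd, even_iff_two_dvd]
  intro h2n
  exact not_coprime_of_dvd_of_dvd one_lt_two h2n (totient_even hn).two_dvd h

end Nat

/-- If `n` is composite and `φ(n) ∣ n - 1`, then `n` is odd and squarefree. -/
theorem lehmer_odd_squarefree (n : ℕ) (hn : 1 < n) (hnp : ¬ n.Prime)
    (h : n.totient ∣ n - 1) : Odd n ∧ Squarefree n := by
  have hn2 : 2 < n := lt_of_le_of_ne hn fun h2 => hnp (h2 ▸ Nat.prime_two)
  have hcop : n.Coprime n.totient := Nat.coprime_totient_of_totient_dvd_sub_one (by omega) h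
  exact ⟨Nat.odd_of_coprime_totient hn2 hcop, Nat.squarefree_of_coprime_totient hcop⟩
end

section
/- For every natural number M ≥ 3 there exists N such that for every finite set S of distinct odd primes with 3 ≤ |S| ≤ M whose elements are all at least N, and for every positive integer m, one has both ∏_{p ∈ S} p ≠ m·∏_{p ∈ S}(p − 1) + 1 and ∏_{p ∈ S} p + 1 ≠ m·∏_{p ∈ S}(p − 1). -/
/-!
Write `P = ∏ p` and `Q = ∏ (p - 1)`. Once the number `k` of primes is bounded and the primes are
large, the Weierstrass product inequality `∏ (1 - 1/p) ≥ 1 - k/N` puts `P/Q` close to `1`, so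
`m * Q = P ± 1` forces `m = 1`. But `P - Q ≥ k ≥ 3`, which rules out `m = 1` as well.
-/

open Finset

lemma Nat.pred_mul_le_mul_pred {A a : ℕ} (h : A ≤ a) : (A - 1) * a ≤ A * (a - 1) := by
  obtain _ | A := A
  · simp
  obtain _ | a := a
  · omega
  simp only [Nat.add_sub_cancel]
  nlinarith

namespace Finset

lemma prod_sub_one_add_card_le_prod {S : Finset ℕ} (h : ∀ p ∈ S, 2 ≤ p) :
    ∏ p ∈ S, (p - 1) + #S ≤ ∏ p ∈ S, p := by
  induction S using Finset.induction_on with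
  | empty => simp
  | @insert a s ha ih =>
    have hs := ih fun p hp => h p (mem_insert_of_mem hp)
    have hpos : 0 < ∏ p ∈ s, p := prod_pos fun p hp => by have := h p (mem_insert_of_mem hp); omega
    obtain ⟨b, rfl⟩ : ∃ b, a = b + 1 := ⟨a - 1, by have := h a (mem_insert_self a s); omega⟩
    have hb : 1 ≤ b := by have := h (b + 1) (mem_insert_self _ s); omega
    rw [prod_insert ha, prod_insert ha, card_insert_of_notMem ha, Nat.add_sub_cancel]
    nlinarith

/-- The Weierstrass product inequality `∏ (1 - 1/p) ≥ 1 - #S/N`, cleared of denominators. -/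
lemma sub_card_mul_prod_le_mul_prod_sub_one {S : Finset ℕ} {N : ℕ} (h : ∀ p ∈ S, N ≤ p) :
    (N - #S) * ∏ p ∈ S, p ≤ N * ∏ p ∈ S, (p - 1) := by
  induction S using Finset.induction_on with
  | empty => simp
  | @insert a s ha ih =>
    have hs := ih fun p hp => h p (mem_insert_of_mem hp)
    have hstep : (N - #s - 1) * a ≤ (N - #s) * (a - 1) :=
      Nat.pred_mul_le_mul_pred ((Nat.sub_le N #s).trans (h a (mem_insert_self a s)))
    rw [prod_insert ha, prod_insert ha, card_insert_of_notMem ha, ← Nat.sub_sub]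
    calc (N - #s - 1) * (a * ∏ p ∈ s, p)
        = (N - #s - 1) * a * ∏ p ∈ s, p := by ring
      _ ≤ (N - #s) * (a - 1) * ∏ p ∈ s, p := by gcongr
      _ = (a - 1) * ((N - #s) * ∏ p ∈ s, p) := by ring
      _ ≤ (a - 1) * (N * ∏ p ∈ s, (p - 1)) := by gcongr
      _ = N * ((a - 1) * ∏ p ∈ s, (p - 1)) := by ring

end Finset

lemma Nat.ne_mul_add_one_and_add_one_ne_mul {P Q : ℕ} (hlow : Q + 2 ≤ P) (hhigh : P + 2 ≤ 2 * Q)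
    (m : ℕ) : P ≠ m * Q + 1 ∧ P + 1 ≠ m * Q := by
  rcases Nat.lt_or_ge m 2 with hm | hm
  · interval_cases m <;> omega
  · have := Nat.mul_le_mul_right Q hm
    omega

theorem lehmer_no_solution_large_primes_general (M : ℕ) :
    ∃ N : ℕ, ∀ S : Finset ℕ, (∀ p ∈ S, p.Prime ∧ 3 ≤ p) →
      3 ≤ S.card → S.card ≤ M → (∀ p ∈ S, N ≤ p) →
      ∀ m : ℕ, 0 < m →
        (∏ p ∈ S, p) ≠ m * (∏ p ∈ S, (p - 1)) + 1 ∧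
        (∏ p ∈ S, p) + 1 ≠ m * (∏ p ∈ S, (p - 1)) := by
  refine ⟨4 * M, fun S _ hcard hcardM hlarge m _ => ?_⟩
  have hgap := prod_sub_one_add_card_le_prod fun p hp => by have := hlarge p hp; omega
  have hratio : 3 * ∏ p ∈ S, p ≤ 4 * ∏ p ∈ S, (p - 1) := by
    have hW := sub_card_mul_prod_le_mul_prod_sub_one hlarge
    have h3M : 3 * M ≤ 4 * M - #S := by omega
    refine Nat.le_of_mul_le_mul_left (c := M) ?_ (by omega)
    calc M * (3 * ∏ p ∈ S, p) = 3 * M * ∏ p ∈ S, p := by ring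
      _ ≤ (4 * M - #S) * ∏ p ∈ S, p := by gcongr
      _ ≤ 4 * M * ∏ p ∈ S, (p - 1) := hW
      _ = M * (4 * ∏ p ∈ S, (p - 1)) := by ring
  exact Nat.ne_mul_add_one_and_add_one_ne_mul (by omega) (by omega) m

/-- Theorem 3 of the paper: for each bound `M ≥ 3` there is `N` such that for every
finite set `S` of at least three distinct odd primes with `|S| ≤ M`, all at least `N`,
the equations `∏ p - m·∏(p-1) = 1` and `∏ p - m·∏(p-1) = -1` have no solution in
positive integers `m`. -/
theorem lehmer_no_solution_large_primes (M : ℕ) (hM : 3 ≤ M) :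
    ∃ N : ℕ, ∀ S : Finset ℕ, (∀ p ∈ S, p.Prime ∧ 3 ≤ p) →
      3 ≤ S.card → S.card ≤ M → (∀ p ∈ S, N ≤ p) →
      ∀ m : ℕ, 0 < m →
        (∏ p ∈ S, p) ≠ m * (∏ p ∈ S, (p - 1)) + 1 ∧
        (∏ p ∈ S, p) + 1 ≠ m * (∏ p ∈ S, (p - 1)) :=
  lehmer_no_solution_large_primes_general M
end
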